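/- arXiv:1711.04866 — 2 statements merged into one kernel-verified Lean document; each statement's English description precedes it below -/
import Mathlib

section
/- If g is a right n-Engel element of a group G, then g^{-1} is a left (n+1)-Engel element of G. -/
/-!
Write `y ^ x = x⁻¹ * y * x`. Since `[x, g⁻¹, g⁻¹] = [g ^ x, g⁻¹] ^ g⁻¹` and conjugation by
`g⁻¹` fixes `g⁻¹`, for `n ≥ 1` we get `[x,_{n+1} g⁻¹] = [g ^ x,_n g⁻¹] ^ g⁻¹`. Conjugating
back by `x⁻¹` turns `[g ^ x,_n g⁻¹]` into a conjugate of `[g,_n x * g⁻¹ * x⁻¹]`, which is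
trivial when `g` is right `n`-Engel. For `n = 0` the element `g` itself is trivial.
-/

def grpComm {G : Type*} [Group G] (a b : G) : G := a⁻¹ * b⁻¹ * a * b

/-- Iterated (Engel) commutator: `engel a b n = [a,_n b]`, with `engel a b 0 = a`. -/
def engel {G : Type*} [Group G] (a b : G) : ℕ → G
  | 0 => a
  | n + 1 => grpComm (engel a b n) b

section

variable {G : Type*} [Group G]

theorem engel_succ' (a b : G) (k : ℕ) : engel a b (k + 1) = engel (grpComm a b) b k := by
  induction k with
  | zero => rfl
  | succ k ih => rw [engel, ih, engel]

theorem map_engel {H F : Type*} [Group H] [FunLike F G H] [MonoidHomClass F G H] (f : F)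
    (a b : G) (k : ℕ) :
    f (engel a b k) = engel (f a) (f b) k := by
  induction k with
  | zero => rfl
  | succ k ih => simp only [engel, grpComm, map_mul, map_inv, ih]

theorem grpComm_grpComm_inv (x a : G) :
    grpComm (grpComm x a⁻¹) a⁻¹ = a * grpComm (x⁻¹ * a * x) a⁻¹ * a⁻¹ := by
  simp only [grpComm]
  group

theorem engel_inv_add_two (x a : G) (k : ℕ) :
    engel x a⁻¹ (k + 2) = a * (x⁻¹ * engel a (x * a⁻¹ * x⁻¹) (k + 1) * x) * a⁻¹ := by
  have conj_inv_self : MulAut.conj a a⁻¹ = a⁻¹ := by simp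
  have conj_conj : MulAut.conj x⁻¹ (x * a⁻¹ * x⁻¹) = a⁻¹ := by simp [mul_assoc]
  calc engel x a⁻¹ (k + 2)
      = engel (MulAut.conj a (grpComm (x⁻¹ * a * x) a⁻¹)) (MulAut.conj a a⁻¹) k := by
        rw [engel_succ', engel_succ', grpComm_grpComm_inv, conj_inv_self, MulAut.conj_apply]
    _ = MulAut.conj a
          (engel (MulAut.conj x⁻¹ a) (MulAut.conj x⁻¹ (x * a⁻¹ * x⁻¹)) (k + 1)) := by
        rw [← map_engel (MulAut.conj a), engel_succ', conj_conj]
        simp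
    _ = a * (x⁻¹ * engel a (x * a⁻¹ * x⁻¹) (k + 1) * x) * a⁻¹ := by
        rw [← map_engel (MulAut.conj x⁻¹)]
        simp

end

/-- If `g` is a right `n`-Engel element of `G`, then `g⁻¹` is a left `(n+1)`-Engel element. -/
theorem stmt1 {G : Type*} [Group G] (n : ℕ) (g : G)
    (hg : ∀ x : G, engel g x n = 1) :
    ∀ x : G, engel x g⁻¹ (n + 1) = 1 := by
  intro x
  cases n with
  | zero =>
    have g_eq_one : g = 1 := hg 1
    simp [engel, grpComm, g_eq_one]
  | succ m =>
    rw [engel_inv_add_two, hg]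
    group
end

section
/- For every natural number j and elements g, t of a group G, the subgroup ⟨g, g^t, ..., g^{t^j}⟩ equals the subgroup ⟨g, [g,t], [g,_2 t], ..., [g,_j t]⟩. -/
open Subgroup

def prefixSet {α : Type*} (f : ℕ → α) (j : ℕ) : Set α := {x | ∃ i : ℕ, i ≤ j ∧ x = f i}

lemma prefixSet_mono {α : Type*} (f : ℕ → α) : Monotone (prefixSet f) := by
  rintro i j hij _ ⟨k, hk, rfl⟩
  exact ⟨k, hk.trans hij, rfl⟩

lemma mem_prefixSet {α : Type*} (f : ℕ → α) {i j : ℕ} (h : i ≤ j) : f i ∈ prefixSet f j :=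
  ⟨i, h, rfl⟩

section

variable {G : Type*} [Group G]

lemma closure_prefixSet_le {f : ℕ → G} {s : ℕ → Set G} (hs : Monotone s)
    (hf : ∀ i, f i ∈ closure (s i)) (j : ℕ) : closure (prefixSet f j) ≤ closure (s j) := by
  rw [closure_le]
  rintro _ ⟨i, hi, rfl⟩
  exact closure_mono (hs hi) (hf i)

lemma conj_mem_closure {s u : Set G} {t x : G} (h : ∀ y ∈ s, t⁻¹ * y * t ∈ closure u)
    (hx : x ∈ closure s) : t⁻¹ * x * t ∈ closure u := by
  have hmap : (closure s).map (MulAut.conj t⁻¹).toMonoidHom ≤ closure u := by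
    rw [MonoidHom.map_closure, closure_le]
    rintro _ ⟨y, hy, rfl⟩
    simpa [mul_assoc] using h y hy
  exact hmap ⟨x, hx, by simp [mul_assoc]⟩

lemma engel_succ_eq (g t : G) (i : ℕ) :
    engel g t (i + 1) = (engel g t i)⁻¹ * (t⁻¹ * engel g t i * t) := by
  simp only [engel, grpComm, mul_assoc]

lemma conj_engel_eq (g t : G) (i : ℕ) :
    t⁻¹ * engel g t i * t = engel g t i * engel g t (i + 1) := by
  rw [engel_succ_eq, mul_inv_cancel_left]

lemma engel_mem_closure_conjPow (g t : G) (i : ℕ) :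
    engel g t i ∈ closure (prefixSet (fun k => (t ^ k)⁻¹ * g * t ^ k) i) := by
  induction i with
  | zero => exact subset_closure ⟨0, le_rfl, by simp [engel]⟩
  | succ n ih =>
    have hconj : t⁻¹ * engel g t n * t ∈
        closure (prefixSet (fun k => (t ^ k)⁻¹ * g * t ^ k) (n + 1)) := by
      refine conj_mem_closure ?_ ih
      rintro _ ⟨k, hk, rfl⟩
      refine subset_closure ⟨k + 1, Nat.succ_le_succ hk, ?_⟩
      group
    rw [engel_succ_eq]
    exact mul_mem (inv_mem (closure_mono (prefixSet_mono _ n.le_succ) ih)) hconj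

lemma conjPow_mem_closure_engel (g t : G) (i : ℕ) :
    (t ^ i)⁻¹ * g * t ^ i ∈ closure (prefixSet (engel g t) i) := by
  induction i with
  | zero => exact subset_closure ⟨0, le_rfl, by simp [engel]⟩
  | succ n ih =>
    have hpow : (t ^ (n + 1))⁻¹ * g * t ^ (n + 1) = t⁻¹ * ((t ^ n)⁻¹ * g * t ^ n) * t := by
      group
    rw [hpow]
    refine conj_mem_closure ?_ ih
    rintro _ ⟨k, hk, rfl⟩
    rw [conj_engel_eq]
    exact mul_mem (subset_closure (mem_prefixSet _ (hk.trans n.le_succ)))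
      (subset_closure (mem_prefixSet _ (Nat.succ_le_succ hk)))

end

/-- `⟨g, g^t, ..., g^{t^j}⟩ = ⟨g, [g,t], ..., [g,_j t]⟩`. -/
theorem stmt3 {G : Type*} [Group G] (j : ℕ) (g t : G) :
    Subgroup.closure {x : G | ∃ i : ℕ, i ≤ j ∧ x = (t ^ i)⁻¹ * g * t ^ i} =
      Subgroup.closure {x : G | ∃ i : ℕ, i ≤ j ∧ x = engel g t i} :=
  le_antisymm
    (closure_prefixSet_le (prefixSet_mono _) (conjPow_mem_closure_engel g t) j)
    (closure_prefixSet_le (prefixSet_mono _) (engel_mem_closure_conjPow g t) j)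
end
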